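/- With ĝ_{i j̄} = Φ_{i j̄}/Φ, the determinant of the 2×2 Hermitian matrix ĝ equals 1/(Φ² Z³). -/

import Mathlib

/-- `Φᵢ = z̄ᵢ Φ^(1−2kᵢ)/Z`. -/
noncomputable def phiD (k1 k2 Φv Zv : ℝ) (z : ℂ × ℂ) (i : Fin 2) : ℂ :=
  (starRingEnd ℂ) (if i = 0 then z.1 else z.2)
    * ((Φv ^ (1 - 2 * (if i = 0 then k1 else k2)) : ℝ) : ℂ) / ((Zv : ℝ) : ℂ)

/-- The explicit formula for the mixed Wirtinger second derivatives
`Φ_{i j̄} = δ_{ij} Φ^(1−2kᵢ)/Z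
  + (1 − 2kᵢ − 2kⱼ + (4/Z) Σₐ kₐ²|zₐ|²Φ^(−2kₐ)) Φᵢ Φ_{j̄}/Φ`. -/
noncomputable def hessEntry (k1 k2 Φv Zv : ℝ) (z : ℂ × ℂ) (i j : Fin 2) : ℂ :=
  (if i = j then ((Φv ^ (1 - 2 * (if i = 0 then k1 else k2)) / Zv : ℝ) : ℂ) else 0)
    + (((1 - 2 * (if i = 0 then k1 else k2) - 2 * (if j = 0 then k1 else k2)
        + 4 / Zv * (k1 ^ 2 * ‖z.1‖ ^ 2 * Φv ^ (-(2 * k1))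
            + k2 ^ 2 * ‖z.2‖ ^ 2 * Φv ^ (-(2 * k2)))) : ℝ) : ℂ)
      * phiD k1 k2 Φv Zv z i * (starRingEnd ℂ) (phiD k1 k2 Φv Zv z j) / ((Φv : ℝ) : ℂ)

open ComplexConjugate

/-! Write `aᵢ = |zᵢ|²Φ^(−2kᵢ)`, so `a₁ + a₂ = 1` and `Φ^(1−2kᵢ) = Φ·Φ^(−2kᵢ)`. The matrix `ĝ` is a
diagonal matrix plus the entrywise product of a real symmetric matrix `c` with `Φᵢ Φ̄ⱼ`, so its
determinant only involves `|Φᵢ|² = aᵢ Φ^(2−2kᵢ)/Z²`. Because `k₁ + k₂ = 1` the powers of `Φ` collapse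
to `Φ^(−2k₁)Φ^(−2k₂) = Φ^(−2)`, leaving `det ĝ = (Z² + Z(a₁c₁₁ + a₂c₂₂) + a₁a₂(c₁₁c₂₂ − c₁₂²)) / (Φ²Z⁴)`,
and the numerator equals `Z` by a polynomial identity in `a₁, k₁` and `S = (4/Z)Σ kₐ²aₐ`. -/

theorem det_fin_two_diag_add_outer_div (d : Fin 2 → ℝ) (c : Fin 2 → Fin 2 → ℝ) (w : Fin 2 → ℂ)
    (t : ℝ) :
    (Matrix.of fun i j : Fin 2 =>
        ((if i = j then (d i : ℂ) else 0) + (c i j : ℂ) * w i * conj (w j) / t) / t).det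
      = ((d 0 * d 1 + (d 0 * c 1 1 * Complex.normSq (w 1) + d 1 * c 0 0 * Complex.normSq (w 0)) / t
          + (c 0 0 * c 1 1 - c 0 1 * c 1 0) * Complex.normSq (w 0) * Complex.normSq (w 1) / t ^ 2)
          / t ^ 2 : ℝ) := by
  have h0 := Complex.mul_conj (w 0)
  have h1 := Complex.mul_conj (w 1)
  rw [Matrix.det_fin_two]
  simp only [Matrix.of_apply, if_pos, Fin.zero_ne_one, Fin.one_eq_zero_iff, if_false]
  push_cast
  linear_combination
    (d 0 * c 1 1 / t ^ 3 + (c 0 0 * c 1 1 - c 0 1 * c 1 0) * Complex.normSq (w 0) / t ^ 4) * h1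
    + (c 0 0 * d 1 / t ^ 3 + (c 0 0 * c 1 1 - c 0 1 * c 1 0) * w 1 * conj (w 1) / t ^ 4) * h0

theorem hess_bracket_eq {k1 k2 a b Z S : ℝ} (hk : k1 + k2 = 1) (hab : a + b = 1)
    (hZ : Z = 2 * (k1 * a + k2 * b)) (hS : S * Z = 4 * (k1 ^ 2 * a + k2 ^ 2 * b)) :
    Z ^ 2 + Z * (a * (1 - 2 * k1 - 2 * k1 + S) + b * (1 - 2 * k2 - 2 * k2 + S))
      + a * b * ((1 - 2 * k1 - 2 * k1 + S) * (1 - 2 * k2 - 2 * k2 + S)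
        - (1 - 2 * k1 - 2 * k2 + S) * (1 - 2 * k2 - 2 * k1 + S)) = Z := by
  obtain rfl : k2 = 1 - k1 := by linarith
  obtain rfl : b = 1 - a := by linarith
  subst hZ
  linear_combination hS

theorem normSq_phiD (k1 k2 Φv Zv : ℝ) (z : ℂ × ℂ) (i : Fin 2) :
    Complex.normSq (phiD k1 k2 Φv Zv z i)
      = ‖if i = 0 then z.1 else z.2‖ ^ 2 * (Φv ^ (1 - 2 * (if i = 0 then k1 else k2))) ^ 2
          / Zv ^ 2 := by
  rw [Complex.normSq_eq_norm_sq]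
  simp only [phiD, norm_div, norm_mul, Complex.norm_conj, Complex.norm_real, Real.norm_eq_abs,
    div_pow, mul_pow, sq_abs]

theorem rpow_one_sub_eq_mul_rpow_neg {x : ℝ} (hx : 0 < x) (y : ℝ) :
    x ^ (1 - y) = x * x ^ (-y) := by
  rw [sub_eq_add_neg, Real.rpow_add hx, Real.rpow_one]

theorem rpow_neg_two_mul_mul_rpow_neg_two_mul {x k1 k2 : ℝ} (hx : 0 < x) (hk : k1 + k2 = 1) :
    x ^ (-(2 * k1)) * x ^ (-(2 * k2)) * x ^ 2 = 1 := by
  rw [← Real.rpow_add hx, ← Real.rpow_natCast, ← Real.rpow_add hx,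
    show -(2 * k1) + -(2 * k2) + ((2 : ℕ) : ℝ) = 0 by push_cast; linarith, Real.rpow_zero]

theorem stmt_7_general (k1 k2 : ℝ) (hk1 : 0 < k1) (hk12 : k1 ≤ k2) (hsum : k1 + k2 = 1)
    (z : ℂ × ℂ) (Φv : ℝ) (hΦ : 0 < Φv)
    (heq : ‖z.1‖ ^ 2 * Φv ^ (-(2 * k1)) + ‖z.2‖ ^ 2 * Φv ^ (-(2 * k2)) = 1)
    (Zv : ℝ)
    (hZ : Zv = 2 * (k1 * ‖z.1‖ ^ 2 * Φv ^ (-(2 * k1))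
        + k2 * ‖z.2‖ ^ 2 * Φv ^ (-(2 * k2)))) :
    (Matrix.of fun i j : Fin 2 => hessEntry k1 k2 Φv Zv z i j / ((Φv : ℝ) : ℂ)).det
      = ((1 / (Φv ^ 2 * Zv ^ 3) : ℝ) : ℂ) := by
  have hZ0 : 0 < Zv := by
    have hk2 : 0 < k2 := hk1.trans_le hk12
    rw [hZ]
    nlinarith [mul_nonneg (sq_nonneg ‖z.1‖) (Real.rpow_pos_of_pos hΦ (-(2 * k1))).le,
      mul_nonneg (sq_nonneg ‖z.2‖) (Real.rpow_pos_of_pos hΦ (-(2 * k2))).le]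
  have hx := rpow_neg_two_mul_mul_rpow_neg_two_mul hΦ hsum
  unfold hessEntry
  rw [det_fin_two_diag_add_outer_div, normSq_phiD, normSq_phiD]
  simp only [Fin.isValue, if_true, Fin.one_eq_zero_iff, OfNat.ofNat_ne_one, if_false,
    rpow_one_sub_eq_mul_rpow_neg hΦ]
  congr 1
  generalize Φv ^ (-(2 * k1)) = x1 at *
  generalize Φv ^ (-(2 * k2)) = x2 at *
  generalize hS : 4 / Zv * (k1 ^ 2 * ‖z.1‖ ^ 2 * x1 + k2 ^ 2 * ‖z.2‖ ^ 2 * x2) = S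
  have hbr := hess_bracket_eq (Z := Zv) (S := S) hsum heq (by rw [hZ]; ring)
    (by rw [← hS]; field_simp)
  field_simp
  linear_combination (x1 * x2 * Φv ^ 2) * hbr + Zv * hx

/-- With `ĝ_{i j̄} = Φ_{i j̄}/Φ`, the determinant of the 2×2 Hermitian matrix `ĝ`
equals `1/(Φ² Z³)`. -/
theorem stmt_7 (k1 k2 : ℝ) (hk1 : 0 < k1) (hk12 : k1 ≤ k2) (hsum : k1 + k2 = 1)
    (z : ℂ × ℂ) (hz : z ≠ 0) (Φv : ℝ) (hΦ : 0 < Φv)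
    (heq : ‖z.1‖ ^ 2 * Φv ^ (-(2 * k1)) + ‖z.2‖ ^ 2 * Φv ^ (-(2 * k2)) = 1)
    (Zv : ℝ)
    (hZ : Zv = 2 * (k1 * ‖z.1‖ ^ 2 * Φv ^ (-(2 * k1))
        + k2 * ‖z.2‖ ^ 2 * Φv ^ (-(2 * k2)))) :
    (Matrix.of fun i j : Fin 2 => hessEntry k1 k2 Φv Zv z i j / ((Φv : ℝ) : ℂ)).det
      = ((1 / (Φv ^ 2 * Zv ^ 3) : ℝ) : ℂ) :=
  stmt_7_general k1 k2 hk1 hk12 hsum z Φv hΦ heq Zv hZ
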